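/- Let G be a group and C ⊆ G a normal cone whose induced relation ≥ is a partial order. Suppose e, f, g are dominants such that γ(e,f)·γ(f,e) = 1 and γ(e,g)·γ(g,e) = 1. Then γ(f,g) = γ(e,g)/γ(e,f) and γ(g,f) = γ(e,f)/γ(e,g); in particular γ(f,g)·γ(g,f) = 1. -/

import Mathlib

/-!
Once `f^n ≥ g^k` is attained at `n = γ_k(f,g)`, transitivity gives `γ_k(a,c) ≤ γ_{γ_k(b,c)}(a,b)`,
whence the submultiplicativity `γ(a,c) ≤ γ(a,b) γ(b,c)`. Routed through `e`, it yields
`γ(e,g) ≤ γ(e,f) γ(f,g) ≤ γ(e,f) γ(f,e) γ(e,g) = γ(e,g)`, so `γ(e,f) γ(f,g) = γ(e,g)`, and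
symmetrically `γ(e,g) γ(g,f) = γ(e,f)`.
-/

open Filter Topology

/-- A subset `C` of a group is a *normal cone* if it contains `1`, is closed under
multiplication, and is invariant under conjugation. -/
def IsNormalCone {G : Type*} [Group G] (C : Set G) : Prop :=
  (1 : G) ∈ C ∧ (∀ f g : G, f ∈ C → g ∈ C → f * g ∈ C) ∧
    (∀ f h : G, f ∈ C → h * f * h⁻¹ ∈ C)

/-- The relation `f ≥ g` induced by the cone `C`: `f * g⁻¹ ∈ C`. -/
def ConeGe {G : Type*} [Group G] (C : Set G) (f g : G) : Prop := f * g⁻¹ ∈ C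

/-- `f` is a *dominant*: it lies in the cone, is not `1`, and some power of `f`
dominates any given element. -/
def IsDominant {G : Type*} [Group G] (C : Set G) (f : G) : Prop :=
  f ∈ C ∧ f ≠ 1 ∧ ∀ g : G, ∃ p : ℕ, ConeGe C (f ^ p) g

/-- `γ_k(f,g) = inf { p ∈ ℤ | f^p ≥ g^k }`. -/
noncomputable def gammaK {G : Type*} [Group G] (C : Set G) (f g : G) (k : ℕ) : ℤ :=
  sInf {p : ℤ | ConeGe C (f ^ p) (g ^ k)}

section Cone

variable {G : Type*} [Group G] {C : Set G}

/-- For a normal cone, this is antisymmetry of `ConeGe C`. -/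
def IsPointed (C : Set G) : Prop := ∀ x ∈ C, x⁻¹ ∈ C → x = 1

theorem isPointed_of_antisymm (hanti : ∀ f g : G, ConeGe C f g → ConeGe C g f → f = g) :
    IsPointed C := fun x hx hx' =>
  hanti x 1 (by simpa [ConeGe] using hx) (by simpa [ConeGe] using hx')

theorem IsNormalCone.one_mem (hC : IsNormalCone C) : (1 : G) ∈ C := hC.1

theorem IsNormalCone.mul_mem (hC : IsNormalCone C) {f g : G} (hf : f ∈ C) (hg : g ∈ C) :
    f * g ∈ C := hC.2.1 f g hf hg

theorem IsNormalCone.conj_mem (hC : IsNormalCone C) {f : G} (hf : f ∈ C) (h : G) :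
    h * f * h⁻¹ ∈ C := hC.2.2 f h hf

theorem IsNormalCone.pow_mem (hC : IsNormalCone C) {f : G} (hf : f ∈ C) (n : ℕ) : f ^ n ∈ C := by
  induction n with
  | zero => simpa using hC.one_mem
  | succ n ih => rw [pow_succ]; exact hC.mul_mem ih hf

theorem IsNormalCone.pow_ne_one (hC : IsNormalCone C) (hC₀ : IsPointed C) {g : G} (hg : g ∈ C)
    (hg1 : g ≠ 1) {k : ℕ} (hk : 1 ≤ k) : g ^ k ≠ 1 := by
  intro hgk
  have hpred : g ^ (k - 1) * g = 1 := by rw [← pow_succ, Nat.sub_add_cancel hk, hgk]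
  exact hg1 (hC₀ g hg (eq_inv_of_mul_eq_one_left hpred ▸ hC.pow_mem hg (k - 1)))

namespace ConeGe

variable {a b c d : G}

theorem refl (hC : IsNormalCone C) (a : G) : ConeGe C a a := by
  simpa [ConeGe] using hC.one_mem

theorem trans (hC : IsNormalCone C) (hab : ConeGe C a b) (hbc : ConeGe C b c) : ConeGe C a c := by
  have h : a * c⁻¹ = (a * b⁻¹) * (b * c⁻¹) := by group
  rw [ConeGe, h]
  exact hC.mul_mem hab hbc

theorem mul (hC : IsNormalCone C) (hab : ConeGe C a b) (hcd : ConeGe C c d) :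
    ConeGe C (a * c) (b * d) := by
  have h : a * c * (b * d)⁻¹ = (a * (c * d⁻¹) * a⁻¹) * (a * b⁻¹) := by group
  rw [ConeGe, h]
  exact hC.mul_mem (hC.conj_mem hcd a) hab

theorem pow (hC : IsNormalCone C) (hab : ConeGe C a b) (n : ℕ) : ConeGe C (a ^ n) (b ^ n) := by
  induction n with
  | zero => simpa using refl hC 1
  | succ n ih => rw [pow_succ, pow_succ]; exact ih.mul hC hab

end ConeGe

/-- A nonpositive power of an element of the cone lies below `1`, hence below no `x ≠ 1` of
the cone. -/
theorem one_le_of_coneGe_pow (hC : IsNormalCone C) (hC₀ : IsPointed C) {f g : G} (hf : f ∈ C)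
    (hg : g ∈ C) (hg1 : g ≠ 1) {k : ℕ} (hk : 1 ≤ k) {p : ℤ}
    (h : ConeGe C (f ^ p) (g ^ k)) : 1 ≤ p := by
  by_contra! hp
  obtain ⟨n, rfl⟩ := Int.exists_eq_neg_ofNat (Int.lt_add_one_iff.mp hp)
  have hle_one : ConeGe C 1 (f ^ (-(n : ℤ))) := by simpa [ConeGe] using hC.pow_mem hf n
  have hgk_inv : (g ^ k)⁻¹ ∈ C := by simpa [ConeGe] using hle_one.trans hC h
  exact hC.pow_ne_one hC₀ hg hg1 hk (hC₀ _ (hC.pow_mem hg k) hgk_inv)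

section GammaK

variable {f g : G} {k : ℕ}

theorem bddBelow_setOf_coneGe_pow (hC : IsNormalCone C) (hC₀ : IsPointed C) (hf : f ∈ C)
    (hg : IsDominant C g) (hk : 1 ≤ k) : BddBelow {p : ℤ | ConeGe C (f ^ p) (g ^ k)} :=
  ⟨1, fun _ => one_le_of_coneGe_pow hC hC₀ hf hg.1 hg.2.1 hk⟩

theorem gammaK_le (hC : IsNormalCone C) (hC₀ : IsPointed C) (hf : f ∈ C) (hg : IsDominant C g)
    (hk : 1 ≤ k) {p : ℤ} (h : ConeGe C (f ^ p) (g ^ k)) : gammaK C f g k ≤ p :=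
  csInf_le (bddBelow_setOf_coneGe_pow hC hC₀ hf hg hk) h

theorem coneGe_pow_gammaK (hC : IsNormalCone C) (hC₀ : IsPointed C) (hf : IsDominant C f)
    (hg : IsDominant C g) (hk : 1 ≤ k) : ConeGe C (f ^ gammaK C f g k) (g ^ k) := by
  obtain ⟨p, hp⟩ := hf.2.2 (g ^ k)
  exact Int.csInf_mem ⟨p, by simpa using hp⟩ (bddBelow_setOf_coneGe_pow hC hC₀ hf.1 hg hk)

theorem one_le_gammaK (hC : IsNormalCone C) (hC₀ : IsPointed C) (hf : IsDominant C f)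
    (hg : IsDominant C g) (hk : 1 ≤ k) : 1 ≤ gammaK C f g k :=
  one_le_of_coneGe_pow hC hC₀ hf.1 hg.1 hg.2.1 hk (coneGe_pow_gammaK hC hC₀ hf hg hk)

theorem gammaK_le_mul_gammaK_one (hC : IsNormalCone C) (hC₀ : IsPointed C) (hf : IsDominant C f)
    (hg : IsDominant C g) (hk : 1 ≤ k) : gammaK C f g k ≤ k * gammaK C f g 1 := by
  have h := (coneGe_pow_gammaK hC hC₀ hf hg le_rfl).pow hC k
  rw [← zpow_natCast, ← zpow_mul, pow_one] at h
  exact (gammaK_le hC hC₀ hf.1 hg hk h).trans_eq (mul_comm _ _)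

theorem gammaK_le_gammaK_of_coneGe {a b c : G} (hC : IsNormalCone C) (hC₀ : IsPointed C)
    (ha : IsDominant C a) (hb : IsDominant C b) (hc : IsDominant C c) {n : ℕ} (hn : 1 ≤ n)
    (hk : 1 ≤ k) (hbc : ConeGe C (b ^ n) (c ^ k)) : gammaK C a c k ≤ gammaK C a b n :=
  gammaK_le hC hC₀ ha.1 hc hk ((coneGe_pow_gammaK hC hC₀ ha hb hn).trans hC hbc)

end GammaK

/-- `γ(f,g) = L`. -/
def HasRelGrowth (C : Set G) (f g : G) (L : ℝ) : Prop :=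
  Tendsto (fun k : ℕ => (gammaK C f g k : ℝ) / (k : ℝ)) atTop (𝓝 L)

theorem HasRelGrowth.nonneg (hC : IsNormalCone C) (hC₀ : IsPointed C) {f g : G}
    (hf : IsDominant C f) (hg : IsDominant C g) {L : ℝ} (h : HasRelGrowth C f g L) : 0 ≤ L := by
  refine ge_of_tendsto h ?_
  filter_upwards [eventually_ge_atTop 1] with k hk
  have : (1 : ℝ) ≤ gammaK C f g k := by exact_mod_cast one_le_gammaK hC hC₀ hf hg hk
  positivity

theorem tendsto_atTop_of_tendsto_div_pos {m : ℕ → ℕ} {L : ℝ}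
    (h : Tendsto (fun k : ℕ => (m k : ℝ) / k) atTop (𝓝 L)) (hL : 0 < L) :
    Tendsto m atTop atTop := by
  rw [← tendsto_natCast_atTop_iff (R := ℝ)]
  refine (h.pos_mul_atTop hL tendsto_natCast_atTop_atTop).congr' ?_
  filter_upwards [eventually_ne_atTop 0] with k hk
  exact div_mul_cancel₀ _ (Nat.cast_ne_zero.mpr hk)

/-- When `γ(b,c) = 0`, the crude bound `γ_n(a,b) ≤ n γ_1(a,b)`
replaces the passage to the subsequence `n = γ_k(b,c)`, which need not tend to infinity. -/
theorem HasRelGrowth.le_mul {a b c : G} (hC : IsNormalCone C) (hC₀ : IsPointed C)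
    (ha : IsDominant C a) (hb : IsDominant C b) (hc : IsDominant C c) {Lab Lbc Lac : ℝ}
    (hab : HasRelGrowth C a b Lab) (hbc : HasRelGrowth C b c Lbc)
    (hac : HasRelGrowth C a c Lac) : Lac ≤ Lab * Lbc := by
  set m : ℕ → ℕ := fun k => (gammaK C b c k).toNat
  have hm : ∀ k, 1 ≤ k → 1 ≤ m k ∧ (m k : ℤ) = gammaK C b c k := fun k hk => by
    have := one_le_gammaK hC hC₀ hb hc hk
    simp only [m]
    omega
  have hac_le : ∀ k, 1 ≤ k → gammaK C a c k ≤ gammaK C a b (m k) := fun k hk => by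
    refine gammaK_le_gammaK_of_coneGe hC hC₀ ha hb hc (hm k hk).1 hk ?_
    simpa [← zpow_natCast, (hm k hk).2] using coneGe_pow_gammaK hC hC₀ hb hc hk
  have hbc' : Tendsto (fun k : ℕ => (m k : ℝ) / k) atTop (𝓝 Lbc) := by
    refine hbc.congr' ?_
    filter_upwards [eventually_ge_atTop 1] with k hk
    rw [← (hm k hk).2, Int.cast_natCast]
  rcases (hbc.nonneg hC hC₀ hb hc).eq_or_lt with hLbc | hLbc
  · rw [← hLbc, mul_zero]
    have hlim := (hbc'.const_mul (gammaK C a b 1 : ℝ)).trans_eq (by rw [← hLbc, mul_zero])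
    refine le_of_tendsto_of_tendsto hac hlim ?_
    filter_upwards [eventually_ge_atTop 1] with k hk
    have hle : gammaK C a c k ≤ m k * gammaK C a b 1 :=
      (hac_le k hk).trans (gammaK_le_mul_gammaK_one hC hC₀ ha hb (hm k hk).1)
    rw [mul_div_assoc', mul_comm]
    gcongr
    exact_mod_cast hle
  · have hab' := (hab.comp (tendsto_atTop_of_tendsto_div_pos hbc' hLbc)).mul hbc'
    refine le_of_tendsto_of_tendsto hac hab' ?_
    filter_upwards [eventually_ge_atTop 1] with k hk
    have hmk : (m k : ℝ) ≠ 0 := by have := (hm k hk).1; positivity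
    simp only [Function.comp_apply, div_mul_div_cancel₀ hmk]
    gcongr
    exact_mod_cast hac_le k hk

theorem HasRelGrowth.mul_eq_of_mul_eq_one {e f g : G} (hC : IsNormalCone C) (hC₀ : IsPointed C)
    (he : IsDominant C e) (hf : IsDominant C f) (hg : IsDominant C g) {Lef Lfe Leg Lfg : ℝ}
    (hef : HasRelGrowth C e f Lef) (hfe : HasRelGrowth C f e Lfe) (heg : HasRelGrowth C e g Leg)
    (hfg : HasRelGrowth C f g Lfg) (h : Lef * Lfe = 1) : Lef * Lfg = Leg := by
  refine le_antisymm ?_ (hef.le_mul hC hC₀ he hf hg hfg heg)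
  calc Lef * Lfg ≤ Lef * (Lfe * Leg) :=
        mul_le_mul_of_nonneg_left (hfe.le_mul hC hC₀ hf he hg heg hfg) (hef.nonneg hC hC₀ he hf)
    _ = Leg := by rw [← mul_assoc, h, one_mul]

end Cone

/-- If `e, f, g` are dominants with `γ(e,f)γ(f,e) = 1` and `γ(e,g)γ(g,e) = 1`,
then `γ(f,g) = γ(e,g)/γ(e,f)`, `γ(g,f) = γ(e,f)/γ(e,g)`, and
`γ(f,g)γ(g,f) = 1`. -/
theorem statement11 {G : Type*} [Group G] (C : Set G) (hC : IsNormalCone C)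
    (hanti : ∀ f g : G, ConeGe C f g → ConeGe C g f → f = g)
    (e f g : G) (he : IsDominant C e) (hf : IsDominant C f) (hg : IsDominant C g)
    (Lef Lfe Leg Lge Lfg Lgf : ℝ)
    (hef : Tendsto (fun k : ℕ => (gammaK C e f k : ℝ) / (k : ℝ)) atTop (nhds Lef))
    (hfe : Tendsto (fun k : ℕ => (gammaK C f e k : ℝ) / (k : ℝ)) atTop (nhds Lfe))
    (heg : Tendsto (fun k : ℕ => (gammaK C e g k : ℝ) / (k : ℝ)) atTop (nhds Leg))
    (hge : Tendsto (fun k : ℕ => (gammaK C g e k : ℝ) / (k : ℝ)) atTop (nhds Lge))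
    (hfg : Tendsto (fun k : ℕ => (gammaK C f g k : ℝ) / (k : ℝ)) atTop (nhds Lfg))
    (hgf : Tendsto (fun k : ℕ => (gammaK C g f k : ℝ) / (k : ℝ)) atTop (nhds Lgf))
    (h1 : Lef * Lfe = 1) (h2 : Leg * Lge = 1) :
    Lfg = Leg / Lef ∧ Lgf = Lef / Leg ∧ Lfg * Lgf = 1 := by
  have hC₀ := isPointed_of_antisymm hanti
  have hLef := left_ne_zero_of_mul_eq_one h1
  have hLeg := left_ne_zero_of_mul_eq_one h2
  have hfg_eq : Lef * Lfg = Leg :=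
    HasRelGrowth.mul_eq_of_mul_eq_one hC hC₀ he hf hg hef hfe heg hfg h1
  have hgf_eq : Leg * Lgf = Lef :=
    HasRelGrowth.mul_eq_of_mul_eq_one hC hC₀ he hg hf heg hge hef hgf h2
  refine ⟨eq_div_of_mul_eq hLef (by rw [mul_comm, hfg_eq]),
    eq_div_of_mul_eq hLeg (by rw [mul_comm, hgf_eq]), ?_⟩
  refine mul_left_cancel₀ (mul_ne_zero hLef hLeg) ?_
  linear_combination Leg * Lgf * hfg_eq + Leg * hgf_eq
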